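/- Let T ≥ 2, N_g = T² − 1, and let Ω = {d_1,…,d_T} be a set of T integers that is a Sidon set modulo N_g (all pairwise differences of distinct elements nonzero and pairwise distinct modulo N_g). Consider the uniform frequency grid f_n = −1 + 2(n−1)/N_g, n = 1,…,N_g, and the sparse-array steering vectors a_Ω(f) ∈ ℂ^T with entries e^{iπ d_t f}. Then the minimum subspace distance of the antenna-space subspace code {a_Ω(f_n) : n = 1,…,N_g} satisfies 1 − max_{l≠k} |a_Ω(f_l)^H a_Ω(f_k)|²/T² ≥ 1 − (2T−1)/T² ≥ 1 − 2/T. -/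

import Mathlib

/-!
On the grid, `a_Ω(f_l)ᴴ a_Ω(f_k) = ∑ₜ ψ(d_t)` for the nontrivial additive character
`ψ x = exp (2πi (k - l) x / N_g)` of `ℤ/N_g`. Expanding `|∑ₜ ψ(d_t)|²`, the diagonal contributes `T`
and, by the Sidon property, the off-diagonal terms are `ψ` summed over a set `D` of `T² - T`
distinct residues. As `ψ` sums to zero over `ℤ/N_g`, `|∑_D ψ| = |∑_{Dᶜ} ψ| ≤ |Dᶜ| = T - 1`, so
`|∑ₜ ψ(d_t)|² ≤ 2T - 1`.
-/

open Finset

namespace AddChar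

variable {G K ι : Type*} [AddCommGroup G] [Fintype G] [RCLike K] [Fintype ι]

lemma norm_sum_le_card_compl [DecidableEq G] {ψ : AddChar G K} (hψ : ψ ≠ 1) (D : Finset G) :
    ‖∑ x ∈ D, ψ x‖ ≤ #Dᶜ := by
  have hsplit : ∑ x ∈ D, ψ x = -∑ x ∈ Dᶜ, ψ x := by
    rw [eq_neg_iff_add_eq_zero, sum_add_sum_compl, sum_eq_zero_of_ne_one hψ]
  rw [hsplit, norm_neg]
  calc ‖∑ x ∈ Dᶜ, ψ x‖ ≤ ∑ x ∈ Dᶜ, ‖ψ x‖ := norm_sum_le _ _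
    _ = #Dᶜ := by simp [norm_apply]

lemma sq_norm_sum_eq (ψ : AddChar G K) (s : ι → G) :
    ((‖∑ i, ψ (s i)‖ ^ 2 : ℝ) : K) = ∑ i, ∑ j, ψ (s i - s j) := by
  rw [RCLike.ofReal_pow, ← RCLike.mul_conj, map_sum, sum_mul_sum]
  simp only [sub_eq_add_neg, map_add_eq_mul, map_neg_eq_conj]

lemma sq_norm_sum_le_of_injOn_sub [DecidableEq G] [DecidableEq ι] {ψ : AddChar G K}
    (hψ : ψ ≠ 1) {s : ι → G}
    (hs : Set.InjOn (fun p : ι × ι ↦ s p.1 - s p.2) (univ.offDiag : Finset (ι × ι))) :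
    ‖∑ i, ψ (s i)‖ ^ 2 ≤ 2 * Fintype.card ι + Fintype.card G - Fintype.card ι ^ 2 := by
  set D := univ.offDiag.image fun p : ι × ι ↦ s p.1 - s p.2
  have hdiag : ∑ p ∈ (univ : Finset ι).diag, ψ (s p.1 - s p.2) = Fintype.card ι := by
    simp
  have hexpand : ((‖∑ i, ψ (s i)‖ ^ 2 : ℝ) : K) = Fintype.card ι + ∑ x ∈ D, ψ x := by
    rw [sq_norm_sum_eq, ← sum_product', ← diag_union_offDiag,
      sum_union (disjoint_diag_offDiag _), hdiag, sum_image hs]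
  have hre : ‖∑ i, ψ (s i)‖ ^ 2 = Fintype.card ι + RCLike.re (∑ x ∈ D, ψ x) := by
    simpa using congrArg RCLike.re hexpand
  have hD : #D = Fintype.card ι * Fintype.card ι - Fintype.card ι := by
    rw [card_image_of_injOn hs, offDiag_card, card_univ]
  calc ‖∑ i, ψ (s i)‖ ^ 2 ≤ Fintype.card ι + ‖∑ x ∈ D, ψ x‖ := by
        rw [hre]; gcongr; exact RCLike.re_le_norm _
    _ ≤ Fintype.card ι + #Dᶜ := by gcongr; exact norm_sum_le_card_compl hψ D
    _ = 2 * Fintype.card ι + Fintype.card G - Fintype.card ι ^ 2 := by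
        rw [card_compl, Nat.cast_sub (card_le_univ D), hD, Nat.cast_sub (Nat.le_mul_self _)]
        push_cast; ring

end AddChar

lemma injOn_sub_intCast_of_sidon {ι : Type*} [Fintype ι] [DecidableEq ι] {N : ℕ} {d : ι → ℤ}
    (hd : ∀ i j m n : ι, i ≠ j → m ≠ n → (i, j) ≠ (m, n) → ¬ d i - d j ≡ d m - d n [ZMOD N]) :
    Set.InjOn (fun p : ι × ι ↦ (d p.1 : ZMod N) - d p.2) (univ.offDiag : Finset (ι × ι)) := by
  rintro ⟨i, j⟩ hij ⟨m, n⟩ hmn heq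
  simp only [coe_offDiag, Set.mem_offDiag, coe_univ, Set.mem_univ, true_and] at hij hmn
  by_contra hne
  refine hd i j m n hij hmn hne ?_
  rw [← ZMod.intCast_eq_intCast_iff]
  push_cast
  exact heq

open Complex in
lemma conj_exp_grid_mul_exp_grid (N : ℕ) [NeZero N] (δ : ℤ) (l k : ℕ) :
    (starRingEnd ℂ) (exp (I * Real.pi * (δ : ℝ) * ((-1 + 2 * (l : ℝ) / N : ℝ) : ℂ))) *
        exp (I * Real.pi * (δ : ℝ) * ((-1 + 2 * (k : ℝ) / N : ℝ) : ℂ)) =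
      (ZMod.stdAddChar.mulShift ((k : ZMod N) - (l : ZMod N))) δ := by
  rw [AddChar.mulShift_apply, ← exp_conj, ← exp_add,
    show ((k : ZMod N) - (l : ZMod N)) * δ = (((k - l : ℤ) * δ : ℤ) : ZMod N) by push_cast; ring,
    ZMod.stdAddChar_coe]
  congr 1
  simp only [map_mul, conj_I, conj_ofReal]
  push_cast
  ring

lemma two_mul_sub_one_div_sq_le (x : ℝ) : (2 * x - 1) / x ^ 2 ≤ 2 / x := by
  have : 2 / x - (2 * x - 1) / x ^ 2 = 1 / x ^ 2 := by
    rcases eq_or_ne x 0 with rfl | hx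
    · simp
    · field_simp; ring
  linarith [this ▸ (by positivity : (0 : ℝ) ≤ 1 / x ^ 2)]

theorem stmt_12_general (T : ℕ) (Ng : ℕ) (hNg : Ng = T ^ 2 - 1)
    (d : Fin T → ℤ)
    (hSidon : ∀ i j m n : Fin T, i ≠ j → m ≠ n → (i, j) ≠ (m, n) →
      ¬ (d i - d j ≡ d m - d n [ZMOD (Ng : ℤ)]))
    (f : Fin Ng → ℝ) (hf : ∀ n, f n = -1 + 2 * (n : ℝ) / Ng)
    (aΩ : ℝ → Fin T → ℂ)
    (haΩ : ∀ g (t : Fin T), aΩ g t = Complex.exp (Complex.I * Real.pi * (d t : ℝ) * g)) :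
    (∀ l k : Fin Ng, l ≠ k →
      1 - ‖∑ t, (starRingEnd ℂ) (aΩ (f l) t) * aΩ (f k) t‖ ^ 2 / (T : ℝ) ^ 2 ≥
        1 - (2 * (T : ℝ) - 1) / (T : ℝ) ^ 2) ∧
    1 - (2 * (T : ℝ) - 1) / (T : ℝ) ^ 2 ≥ 1 - 2 / (T : ℝ) := by
  refine ⟨fun l k hlk ↦ ?_, sub_le_sub_left (two_mul_sub_one_div_sq_le T) 1⟩
  have : NeZero Ng := ⟨l.pos.ne'⟩
  have hNgR : (Ng : ℝ) = T ^ 2 - 1 := by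
    have hT : 1 ≤ T ^ 2 := by have := l.pos; omega
    rw [hNg, Nat.cast_sub hT]; push_cast; ring
  set ψ := ZMod.stdAddChar.mulShift ((k : ZMod Ng) - (l : ZMod Ng))
  have hψ : ψ ≠ 1 := ZMod.isPrimitive_stdAddChar Ng <| sub_ne_zero.2 fun h ↦ hlk <| Fin.ext <| by
    simpa [Nat.mod_eq_of_lt, l.isLt, k.isLt] using congrArg ZMod.val h.symm
  have hterm : ∀ t, (starRingEnd ℂ) (aΩ (f l) t) * aΩ (f k) t = ψ (d t) := fun t ↦ by
    rw [haΩ, haΩ, hf, hf, conj_exp_grid_mul_exp_grid]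
  have hbound := AddChar.sq_norm_sum_le_of_injOn_sub hψ (s := fun t ↦ (d t : ZMod Ng))
    (injOn_sub_intCast_of_sidon hSidon)
  rw [Fintype.card_fin, ZMod.card, hNgR] at hbound
  simp only [hterm, ge_iff_le, sub_le_sub_iff_left]
  gcongr
  linarith

/-- For a Sidon set `Ω` modulo `N_g = T² − 1`, the antenna-space
subspace code `{a_Ω(f_n)}` on the uniform grid has minimum subspace distance at
least `1 − (2T−1)/T² ≥ 1 − 2/T`. -/
theorem stmt_12 (T : ℕ) (hT : 2 ≤ T) (Ng : ℕ) (hNg : Ng = T ^ 2 - 1)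
    (d : Fin T → ℤ)
    (hSidon0 : ∀ i j : Fin T, i ≠ j → ¬ ((Ng : ℤ) ∣ (d i - d j)))
    (hSidon : ∀ i j m n : Fin T, i ≠ j → m ≠ n → (i, j) ≠ (m, n) →
      ¬ (d i - d j ≡ d m - d n [ZMOD (Ng : ℤ)]))
    (f : Fin Ng → ℝ) (hf : ∀ n, f n = -1 + 2 * (n : ℝ) / Ng)
    (aΩ : ℝ → Fin T → ℂ)
    (haΩ : ∀ g (t : Fin T), aΩ g t = Complex.exp (Complex.I * Real.pi * (d t : ℝ) * g)) :
    (∀ l k : Fin Ng, l ≠ k →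
      1 - ‖∑ t, (starRingEnd ℂ) (aΩ (f l) t) * aΩ (f k) t‖ ^ 2 / (T : ℝ) ^ 2 ≥
        1 - (2 * (T : ℝ) - 1) / (T : ℝ) ^ 2) ∧
    1 - (2 * (T : ℝ) - 1) / (T : ℝ) ^ 2 ≥ 1 - 2 / (T : ℝ) :=
  stmt_12_general T Ng hNg d hSidon f hf aΩ haΩ
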